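/- arXiv:2305.04592 — 8 statements merged into one kernel-verified Lean document; each statement's English description precedes it below -/
import Mathlib

section
/- Every p-morphism from an ordinal (with the reverse order relation, i.e. p R p' iff p > p') to any Kripke frame is injective. -/
/-- A Kripke frame: a set with a binary relation. -/
structure KFrame : Type 1 where
  carrier : Type
  rel : carrier → carrier → Prop

/-- A p-morphism between Kripke frames: a stable and open function. -/
structure PMorphism (P Q : KFrame) where
  toFun : P.carrier → Q.carrier
  stable : ∀ ⦃p p'⦄, P.rel p p' → Q.rel (toFun p) (toFun p')
  isOpen : ∀ ⦃p q'⦄, Q.rel (toFun p) q' → ∃ p', P.rel p p' ∧ toFun p' = q'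

/-- Every p-morphism from an ordinal (with the reverse order relation) to any
Kripke frame is injective. -/
theorem stmt0 (α : Type) [LinearOrder α] [WellFoundedLT α] (Q : KFrame)
    (f : PMorphism ⟨α, fun p p' => p' < p⟩ Q) :
    Function.Injective f.toFun := by
  have irr : ∀ x : α, ¬ Q.rel (f.toFun x) (f.toFun x) := by
    intro x
    induction x using WellFoundedLT.induction with
    | ind x ih =>
      intro h
      obtain ⟨x', hx', hfx'⟩ := f.isOpen h
      apply ih x' hx'
      have := f.stable hx'
      rw [hfx'] at this ⊢
      exact this
  intro a b hab
  by_contra hne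
  rcases lt_or_gt_of_ne hne with h | h
  · have := f.stable (show a < b from h)
    rw [hab] at this
    exact irr b this
  · have := f.stable (show b < a from h)
    rw [hab] at this
    exact irr b this
end

section
/- The category of Kripke frames and p-morphisms does not have a terminal object. -/
/-- The category of Kripke frames and p-morphisms has no terminal object:
there is no frame `T` such that every frame has exactly one p-morphism into `T`. -/
theorem stmt1 :
    ¬ ∃ T : KFrame, ∀ P : KFrame,
        ∃ f : PMorphism P T, ∀ g : PMorphism P T, g = f := by
  rintro ⟨T, h⟩
  -- Consider the frame on `Set T.carrier` with the reverse of a well-ordering.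
  let r : Set T.carrier → Set T.carrier → Prop := WellOrderingRel
  obtain ⟨f, -⟩ := h ⟨Set T.carrier, fun a b => r b a⟩
  -- Any p-morphism from a reverse well-order is injective.
  have key : ∀ a b : Set T.carrier, r b a → f.toFun a = f.toFun b → False := by
    intro a b hr heq
    have hloop : T.rel (f.toFun b) (f.toFun b) := by
      have := f.stable (p := a) (p' := b) hr
      rwa [heq] at this
    have hwf : WellFounded r := (WellOrderingRel.isWellOrder).wf
    obtain ⟨m, hmS, hmin⟩ :=
      hwf.has_min {z | f.toFun z = f.toFun b} ⟨b, rfl⟩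
    have hloop' : T.rel (f.toFun m) (f.toFun m) := by
      rw [show f.toFun m = f.toFun b from hmS]; exact hloop
    obtain ⟨m', hrm, hfm⟩ := f.isOpen hloop'
    exact hmin m' (show f.toFun m' = f.toFun b by
      rw [hfm, show f.toFun m = f.toFun b from hmS]) hrm
  have hinj : Function.Injective f.toFun := by
    intro x y hxy
    by_contra hne
    rcases trichotomous_of r x y with h1 | h2 | h3
    · exact key y x h1 hxy.symm
    · exact hne h2
    · exact key x y h3 hxy
  exact Function.cantor_injective f.toFun hinj
end

section
/- Let f, g : (P,R) → (Q,S) be parallel p-morphisms between Kripke frames. Let ∼ be the smallest equivalence relation on Q containing all pairs (f(p), g(p)) for p ∈ P, and define [x] S̄ [y] iff there exists ỹ ∼ y with x S ỹ. Then S̄ is well defined (independent of the representative x), the quotient map π : Q → Q/∼ is a p-morphism, and (Q/∼, S̄) with π is the coequalizer of f and g in the category of Kripke frames and p-morphisms. -/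
variable (P Q : KFrame) (f g : PMorphism P Q)

/-- The smallest equivalence relation on `Q` containing all pairs `(f p, g p)`. -/
def Sim : Q.carrier → Q.carrier → Prop :=
  Relation.EqvGen fun x y => ∃ p, x = f.toFun p ∧ y = g.toFun p

/-- The quotient frame `(Q/∼, S̄)`: `[x] S̄ [y]` iff some representatives are `S`-related
(equivalently, by well-definedness, iff `x S ỹ` for some `ỹ ∼ y`). -/
def CoeqFrame : KFrame where
  carrier := Quot (Sim P Q f g)
  rel a b := ∃ x y, Quot.mk (Sim P Q f g) x = a ∧ Quot.mk (Sim P Q f g) y = b ∧ Q.rel x y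


lemma PMorphism.ext' {P Q : KFrame} {a b : PMorphism P Q} (h : a.toFun = b.toFun) : a = b := by
  cases a; cases b; cases h; rfl

lemma sim_equiv : Equivalence (Sim P Q f g) := Relation.EqvGen.is_equivalence _

lemma sim_of_mk_eq {a b : Q.carrier}
    (h : Quot.mk (Sim P Q f g) a = Quot.mk (Sim P Q f g) b) : Sim P Q f g a b := by
  have h' := Quot.eqvGen_exact h
  clear h
  induction h' with
  | rel _ _ h => exact h
  | refl => exact (sim_equiv P Q f g).refl _
  | symm _ _ _ ih => exact (sim_equiv P Q f g).symm ih
  | trans _ _ _ _ _ ih1 ih2 => exact (sim_equiv P Q f g).trans ih1 ih2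

lemma wd_iff {x x' : Q.carrier} (hs : Sim P Q f g x x') (y : Q.carrier) :
    (∃ ytil, Sim P Q f g ytil y ∧ Q.rel x ytil) ↔
    (∃ ytil, Sim P Q f g ytil y ∧ Q.rel x' ytil) := by
  induction hs generalizing y with
  | rel a b hab =>
    obtain ⟨p, rfl, rfl⟩ := hab
    constructor
    · rintro ⟨yt, hyt, hrel⟩
      obtain ⟨p', hpp', hfp'⟩ := f.isOpen hrel
      refine ⟨g.toFun p', ?_, g.stable hpp'⟩
      exact (sim_equiv P Q f g).trans
        ((sim_equiv P Q f g).symm (Relation.EqvGen.rel _ _ ⟨p', rfl, rfl⟩))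
        ((sim_equiv P Q f g).trans (hfp' ▸ (sim_equiv P Q f g).refl (f.toFun p')) hyt)
    · rintro ⟨yt, hyt, hrel⟩
      obtain ⟨p', hpp', hgp'⟩ := g.isOpen hrel
      refine ⟨f.toFun p', ?_, f.stable hpp'⟩
      exact (sim_equiv P Q f g).trans
        ((Relation.EqvGen.rel _ _ ⟨p', rfl, rfl⟩ : Sim P Q f g (f.toFun p') (g.toFun p')))
        ((sim_equiv P Q f g).trans (hgp' ▸ (sim_equiv P Q f g).refl (g.toFun p')) hyt)
  | refl => exact Iff.rfl
  | symm _ _ _ ih => exact (ih y).symm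
  | trans _ _ _ _ _ ih1 ih2 => exact (ih1 y).trans (ih2 y)

/-- `S̄` is well defined (independent of the representative `x`), the quotient map `π`
is a p-morphism coequalizing `f` and `g`, and `(Q/∼, S̄)` with `π` is the coequalizer of
`f` and `g` in the category of Kripke frames and p-morphisms. -/
theorem stmt3 :
    (∀ x x' y, Sim P Q f g x x' →
      ((∃ ytil, Sim P Q f g ytil y ∧ Q.rel x ytil) ↔
       (∃ ytil, Sim P Q f g ytil y ∧ Q.rel x' ytil))) ∧
    (∃ π : PMorphism Q (CoeqFrame P Q f g),
      π.toFun = Quot.mk (Sim P Q f g) ∧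
      π.toFun ∘ f.toFun = π.toFun ∘ g.toFun ∧
      ∀ (T : KFrame) (h : PMorphism Q T),
        h.toFun ∘ f.toFun = h.toFun ∘ g.toFun →
        ∃! φ : PMorphism (CoeqFrame P Q f g) T, φ.toFun ∘ π.toFun = h.toFun) := by
  refine ⟨fun x x' y hs => wd_iff P Q f g hs y, ?_⟩
  refine ⟨⟨Quot.mk (Sim P Q f g), fun a b hab => ⟨a, b, rfl, rfl, hab⟩, ?_⟩, rfl, ?_, ?_⟩
  · rintro x q' ⟨u, v, hu, hv, huv⟩
    have hsim : Sim P Q f g u x := sim_of_mk_eq P Q f g hu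
    obtain ⟨yt, hyt, hrel⟩ := (wd_iff P Q f g hsim v).mp ⟨v, (sim_equiv P Q f g).refl v, huv⟩
    exact ⟨yt, hrel, hv ▸ Quot.sound hyt⟩
  · funext p
    exact Quot.sound (Relation.EqvGen.rel _ _ ⟨p, rfl, rfl⟩)
  · intro T h hcomm
    have hresp : ∀ a b, Sim P Q f g a b → h.toFun a = h.toFun b := by
      intro a b hab
      induction hab with
      | rel a b hab => obtain ⟨p, rfl, rfl⟩ := hab; exact congrFun hcomm p
      | refl => rfl
      | symm _ _ _ ih => exact ih.symm
      | trans _ _ _ _ _ ih1 ih2 => exact ih1.trans ih2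
    refine ⟨⟨Quot.lift h.toFun hresp, ?_, ?_⟩, rfl, ?_⟩
    · rintro a b ⟨x, y, rfl, rfl, hxy⟩
      exact h.stable hxy
    · rintro a t' hrel
      induction a using Quot.ind with
      | _ x =>
        obtain ⟨x', hxx', hx'⟩ := h.isOpen hrel
        exact ⟨Quot.mk _ x', ⟨x, x', rfl, rfl, hxx'⟩, hx'⟩
    · intro φ hφ
      apply PMorphism.ext'
      funext a
      induction a using Quot.ind with
      | _ x => exact congrFun hφ x
end

section
/- Let f, g : (P,R) → (Q,S) be parallel p-morphisms between Kripke frames, and let E = { p ∈ P | for all p', p R* p' implies f(p') = g(p') }, where R* is the reflexive-transitive closure of R. Then E is a generated subframe of P (closed under R-successors), and the inclusion E → P is the equalizer of f and g in the category of Kripke frames and p-morphisms. -/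
/-- The subframe of `P` on a subset `G`, with the restricted relation. -/
def Subframe (P : KFrame) (G : Set P.carrier) : KFrame where
  carrier := {p // p ∈ G}
  rel a b := P.rel a.1 b.1

/-- `G` is a generated subframe of `P`: it is closed under `R`-successors. -/
def GenSub (P : KFrame) (G : Set P.carrier) : Prop :=
  ∀ ⦃a⦄, a ∈ G → ∀ ⦃b⦄, P.rel a b → b ∈ G

theorem PMorphism.ext'_s4 {P Q : KFrame} {f g : PMorphism P Q} (h : f.toFun = g.toFun) :
    f = g := by
  cases f; cases g; simp_all

/-- Reflexive-transitive successors lift along a p-morphism. -/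
theorem PMorphism.isOpenStar {P Q : KFrame} (h : PMorphism P Q) {p : P.carrier}
    {q' : Q.carrier} (hr : Relation.ReflTransGen Q.rel (h.toFun p) q') :
    ∃ p', Relation.ReflTransGen P.rel p p' ∧ h.toFun p' = q' := by
  induction hr with
  | refl => exact ⟨p, Relation.ReflTransGen.refl, rfl⟩
  | tail _ hbc ih =>
    obtain ⟨p', hpp', rfl⟩ := ih
    obtain ⟨p'', h1, h2⟩ := h.isOpen hbc
    exact ⟨p'', hpp'.tail h1, h2⟩

/-- The set `E = { p | ∀ p', p R* p' → f p' = g p' }` is a generated subframe of `P`, and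
its inclusion into `P` is the equalizer of `f` and `g` in the category of Kripke frames. -/
theorem stmt4 (P Q : KFrame) (f g : PMorphism P Q) :
    GenSub P {p | ∀ p', Relation.ReflTransGen P.rel p p' → f.toFun p' = g.toFun p'} ∧
    (∃ inc : PMorphism
        (Subframe P {p | ∀ p', Relation.ReflTransGen P.rel p p' → f.toFun p' = g.toFun p'}) P,
      inc.toFun = Subtype.val ∧
      f.toFun ∘ inc.toFun = g.toFun ∘ inc.toFun ∧
      ∀ (A : KFrame) (h : PMorphism A P),
        f.toFun ∘ h.toFun = g.toFun ∘ h.toFun →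
        ∃! l : PMorphism A
            (Subframe P {p | ∀ p', Relation.ReflTransGen P.rel p p' → f.toFun p' = g.toFun p'}),
          inc.toFun ∘ l.toFun = h.toFun) := by
  set E : Set P.carrier :=
    {p | ∀ p', Relation.ReflTransGen P.rel p p' → f.toFun p' = g.toFun p'} with hE
  have hgen : GenSub P E := fun a ha b hab p' hr => ha p' (Relation.ReflTransGen.head hab hr)
  refine ⟨hgen, ?_⟩
  refine ⟨⟨Subtype.val, fun a b hr => hr, fun a q' hr => ⟨⟨q', hgen a.2 hr⟩, hr, rfl⟩⟩,
    rfl, ?_, ?_⟩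
  · funext a
    exact a.2 a.1 Relation.ReflTransGen.refl
  · intro A h hfg
    have hmem : ∀ a : A.carrier, h.toFun a ∈ E := by
      intro a p' hr
      obtain ⟨a', _, rfl⟩ := h.isOpenStar hr
      exact congrFun hfg a'
    refine ⟨⟨fun a => ⟨h.toFun a, hmem a⟩, fun a b hr => h.stable hr, ?_⟩, rfl, ?_⟩
    · intro a b hr
      obtain ⟨a', h1, h2⟩ := h.isOpen hr
      exact ⟨a', h1, Subtype.ext h2⟩
    · intro l hl
      apply PMorphism.ext'_s4
      funext a
      exact Subtype.ext (congrFun hl a)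
end

section
/- A morphism in the category of Kripke frames and p-morphisms is an epimorphism if and only if it is surjective as a function. -/
lemma PMorphism.ext'_s6 {P Q : KFrame} {h k : PMorphism P Q}
    (e : h.toFun = k.toFun) : h = k := by
  cases h; cases k; cases e; rfl

/-- A p-morphism is an epimorphism in the category of Kripke frames and p-morphisms
iff it is surjective as a function. -/
theorem stmt6 (P Q : KFrame) (f : PMorphism P Q) :
    (∀ (T : KFrame) (h k : PMorphism Q T),
        h.toFun ∘ f.toFun = k.toFun ∘ f.toFun → h = k) ↔
    Function.Surjective f.toFun := by
  constructor
  · intro hepi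
    -- cokernel pair construction
    classical
    set Im : Set Q.carrier := Set.range f.toFun with hIm
    -- the image is closed under successors
    have hclosed : ∀ {q q'}, q ∈ Im → Q.rel q q' → q' ∈ Im := by
      rintro q q' ⟨p, rfl⟩ hrel
      obtain ⟨p', _, rfl⟩ := f.isOpen hrel
      exact ⟨p', rfl⟩
    let A : KFrame :=
      { carrier := Q.carrier ⊕ {q : Q.carrier // q ∉ Im}
        rel := fun a b =>
          match a, b with
          | Sum.inl q, Sum.inl q' => Q.rel q q'
          | Sum.inl _, Sum.inr _ => False
          | Sum.inr q, Sum.inl q' => Q.rel q.val q' ∧ q' ∈ Im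
          | Sum.inr q, Sum.inr q' => Q.rel q.val q'.val }
    let i1 : PMorphism Q A :=
      { toFun := Sum.inl
        stable := fun _ _ h => h
        isOpen := by
          intro q b hrel
          match b with
          | Sum.inl q' => exact ⟨q', hrel, rfl⟩
          | Sum.inr q' => exact absurd hrel (by simp [A]) }
    let i2fun : Q.carrier → A.carrier := fun q =>
      if h : q ∈ Im then Sum.inl q else Sum.inr ⟨q, h⟩
    let i2 : PMorphism Q A :=
      { toFun := i2fun
        stable := by
          intro q q' hrel
          by_cases hq : q ∈ Im
          · have hq' : q' ∈ Im := hclosed hq hrel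
            simp only [i2fun, dif_pos hq, dif_pos hq']
            exact hrel
          · by_cases hq' : q' ∈ Im
            · simp only [i2fun, dif_neg hq, dif_pos hq']
              exact ⟨hrel, hq'⟩
            · simp only [i2fun, dif_neg hq, dif_neg hq']
              exact hrel
        isOpen := by
          intro q b hrel
          by_cases hq : q ∈ Im
          · simp only [i2fun, dif_pos hq] at hrel
            match b with
            | Sum.inl q' =>
              have hq' : q' ∈ Im := hclosed hq hrel
              exact ⟨q', hrel, by simp [i2fun, dif_pos hq']⟩
            | Sum.inr q' => exact absurd hrel (by simp [A])
          · simp only [i2fun, dif_neg hq] at hrel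
            match b with
            | Sum.inl q' =>
              exact ⟨q', hrel.1, by simp [i2fun, dif_pos hrel.2]⟩
            | Sum.inr q' =>
              exact ⟨q'.val, hrel, by simp [i2fun, dif_neg q'.property]⟩ }
    have hcomp : i1.toFun ∘ f.toFun = i2.toFun ∘ f.toFun := by
      funext p
      have : f.toFun p ∈ Im := ⟨p, rfl⟩
      simp [i1, i2, i2fun, dif_pos this]
    have heq := hepi A i1 i2 hcomp
    intro q
    by_contra hq
    have hq' : q ∉ Im := fun ⟨p, hp⟩ => hq ⟨p, hp⟩
    have : i1.toFun q = i2.toFun q := by rw [heq]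
    simp [i1, i2, i2fun, dif_neg hq'] at this
  · intro hsurj T h k hcomp
    apply PMorphism.ext'_s6
    funext q
    obtain ⟨p, rfl⟩ := hsurj q
    exact congrFun hcomp p
end

section
/- Given p-morphisms f, g : (P,R) → (Q,S) and t : (Q,S) → (P,R) with t∘f = id_P and t∘g = id_P (a coreflexive pair), the set { p ∈ P | f(p) = g(p) } is a generated subframe of P (i.e., closed under R-successors). -/
/-- For a coreflexive pair `f, g : P ⇉ Q` (with common retraction `t`), the set
`{ p | f p = g p }` is a generated subframe of `P`. -/
theorem stmt8 (P Q : KFrame) (f g : PMorphism P Q) (t : PMorphism Q P)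
    (hf : t.toFun ∘ f.toFun = id) (hg : t.toFun ∘ g.toFun = id) :
    ∀ p p', f.toFun p = g.toFun p → P.rel p p' → f.toFun p' = g.toFun p' := by
  intro p p' heq hR
  have hS : Q.rel (g.toFun p) (f.toFun p') := heq ▸ f.stable hR
  obtain ⟨p'', hR'', hgp''⟩ := g.isOpen hS
  have h1 : t.toFun (g.toFun p'') = p'' := congrFun hg p''
  have h2 : t.toFun (f.toFun p') = p' := congrFun hf p'
  have : p'' = p' := by rw [← h1, hgp'', h2]
  rw [← hgp'', this]
end

section
/- Thomason duality on objects: for a Kripke frame (P,R), the powerset modal algebra (𝒫(P), ◇_R) is a complete atomic completely-additive modal algebra; conversely, for a complete atomic completely-additive modal algebra (B,◇), defining on the set of atoms the relation a R b iff a ≤ ◇b yields a Kripke frame whose powerset modal algebra is isomorphic to (B,◇). -/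
/-- The diamond operator on the powerset of a Kripke frame. -/
def Dia (P : KFrame) (X : Set P.carrier) : Set P.carrier :=
  {p | ∃ p', P.rel p p' ∧ p' ∈ X}

/-- An atom below a sSup is below some member. -/
lemma atom_le_sSup {B : Type} [CompleteAtomicBooleanAlgebra B] {a : B}
    (ha : IsAtom a) {s : Set B} (h : a ≤ sSup s) : ∃ x ∈ s, a ≤ x := by
  by_contra hc
  push_neg at hc
  have h1 : a = a ⊓ sSup s := (inf_eq_left.2 h).symm
  rw [inf_sSup_eq] at h1
  have h2 : ∀ x ∈ s, a ⊓ x = ⊥ := by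
    intro x hx
    rcases lt_or_eq_of_le (inf_le_left : a ⊓ x ≤ a) with h | h
    · exact ha.2 _ h
    · exact absurd (h ▸ inf_le_right : a ≤ x) (hc x hx)
  have : (⨆ b ∈ s, a ⊓ b) = ⊥ := by
    simp only [iSup_eq_bot]
    intro x hx; exact h2 x hx
  exact ha.1 (h1.trans this)

/-- Thomason duality on objects: the powerset modal algebra of a Kripke frame is a
complete atomic completely-additive modal algebra (its diamond preserves arbitrary
joins); conversely, every complete atomic modal algebra whose diamond preserves
arbitrary joins is isomorphic to the powerset modal algebra of the Kripke frame of its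
atoms, where `a R b` iff `a ≤ ◇b`. -/
theorem stmt17 :
    (∀ (P : KFrame) (s : Set (Set P.carrier)), Dia P (⋃₀ s) = ⋃₀ (Dia P '' s)) ∧
    (∀ (B : Type) [CompleteAtomicBooleanAlgebra B] (D : B → B),
      (∀ s : Set B, D (sSup s) = sSup (D '' s)) →
      ∃ e : B ≃o Set {a : B // IsAtom a},
        ∀ b : B, e (D b) =
          {p : {a : B // IsAtom a} | ∃ p' : {a : B // IsAtom a},
            p.1 ≤ D p'.1 ∧ p' ∈ e b}) := by
  constructor
  · intro P s
    ext p
    simp only [Dia, Set.mem_setOf_eq, Set.mem_sUnion, Set.mem_image]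
    constructor
    · rintro ⟨p', hr, X, hX, hp'⟩
      exact ⟨Dia P X, ⟨X, hX, rfl⟩, p', hr, hp'⟩
    · rintro ⟨_, ⟨X, hX, rfl⟩, p', hr, hp'⟩
      exact ⟨p', hr, X, hX, hp'⟩
  · intro B _ D hD
    -- key: image of atoms below b
    have key : ∀ b : B, sSup (Subtype.val '' {a : {a : B // IsAtom a} | a.1 ≤ b}) = b := by
      intro b
      have : Subtype.val '' {a : {a : B // IsAtom a} | a.1 ≤ b}
          = {a : B | IsAtom a ∧ a ≤ b} := by
        ext x
        simp only [Set.mem_image, Set.mem_setOf_eq]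
        exact ⟨fun ⟨a, h1, h2⟩ => h2 ▸ ⟨a.2, h1⟩, fun ⟨h1, h2⟩ => ⟨⟨x, h1⟩, h2, rfl⟩⟩
      rw [this, sSup_atoms_le_eq]
    have atom_le_atom : ∀ (a x : B), IsAtom a → IsAtom x → a ≤ x → a = x := by
      intro a x ha hx h
      rcases lt_or_eq_of_le h with h | h
      · exact absurd (hx.2 a h) ha.1
      · exact h
    let e : B ≃o Set {a : B // IsAtom a} :=
      { toFun := fun b => {a | a.1 ≤ b}
        invFun := fun s => sSup (Subtype.val '' s)
        left_inv := key
        right_inv := by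
          intro s
          ext a
          simp only [Set.mem_setOf_eq]
          constructor
          · intro h
            obtain ⟨x, hx, hax⟩ := atom_le_sSup a.2 h
            obtain ⟨a', ha', rfl⟩ := hx
            have := atom_le_atom a.1 a'.1 a.2 a'.2 hax
            rwa [Subtype.ext this]
          · intro h
            exact le_sSup ⟨a, h, rfl⟩
        map_rel_iff' := by
          intro b c
          simp only [Equiv.coe_fn_mk, Set.le_iff_subset, Set.setOf_subset_setOf]
          constructor
          · intro h
            exact le_iff_atom_le_imp.2 fun x hx hxb => h ⟨x, hx⟩ hxb
          · intro h a ha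
            exact ha.trans h }
    have Dmono : Monotone D := by
      intro x y hxy
      have : D y = sSup (D '' {x, y}) := by
        rw [← hD, sSup_pair, sup_eq_right.2 hxy]
      rw [this]
      exact le_sSup ⟨x, by simp, rfl⟩
    refine ⟨e, fun b => ?_⟩
    ext p
    simp only [Set.mem_setOf_eq]
    show p.1 ≤ D b ↔ ∃ p' : {a : B // IsAtom a}, p.1 ≤ D p'.1 ∧ p'.1 ≤ b
    constructor
    · intro h
      have hb : D b = sSup (D '' (Subtype.val '' {a : {a : B // IsAtom a} | a.1 ≤ b})) := by
        rw [← hD, key]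
      rw [hb] at h
      obtain ⟨x, hx, hpx⟩ := atom_le_sSup p.2 h
      obtain ⟨y, hy, rfl⟩ := hx
      obtain ⟨a', ha', rfl⟩ := hy
      exact ⟨a', hpx, ha'⟩
    · rintro ⟨p', h1, h2⟩
      exact h1.trans (Dmono h2)
end

section
/- Finite Kripke frames are finitely presentable objects in the category of locally finite Kripke frames and p-morphisms: for any finite frame P and any filtered colimit Q = colim_i Q_i of locally finite frames, every p-morphism P → Q factors through some Q_i via a p-morphism, uniquely up to the equivalence identifying factorizations through a common later stage. -/
/-- A frame is locally finite if `R*(p)` is finite for every point `p`. -/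
def KFrameLocallyFinite (P : KFrame) : Prop :=
  ∀ p, {q | Relation.ReflTransGen P.rel p q}.Finite

namespace Stmt19Aux
open CategoryTheory
set_option linter.unusedSectionVars false

/-- Composition of p-morphisms. -/
def PComp {A B C : KFrame} (f : PMorphism A B) (g : PMorphism B C) : PMorphism A C where
  toFun := g.toFun ∘ f.toFun
  stable := fun _ _ h => g.stable (f.stable h)
  isOpen := fun p q' h => by
    obtain ⟨b, hb, hb2⟩ := g.isOpen h
    obtain ⟨a, ha, ha2⟩ := f.isOpen hb
    exact ⟨a, ha, by simp [Function.comp, ha2, hb2]⟩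

/-- Identity p-morphism. -/
def PId (A : KFrame) : PMorphism A A where
  toFun := id
  stable := fun _ _ h => h
  isOpen := fun _ q' h => ⟨q', h, rfl⟩

/-- Open maps lift reflexive-transitive chains. -/
theorem lift_rtg {A B : KFrame} (h : PMorphism A B) {a : A.carrier} {b : B.carrier}
    (H : Relation.ReflTransGen B.rel (h.toFun a) b) :
    ∃ a', Relation.ReflTransGen A.rel a a' ∧ h.toFun a' = b := by
  induction H with
  | refl => exact ⟨a, Relation.ReflTransGen.refl, rfl⟩
  | tail _ hrel ih =>
    obtain ⟨a', ht, rfl⟩ := ih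
    obtain ⟨a'', h1, h2⟩ := h.isOpen hrel
    exact ⟨a'', ht.tail h1, h2⟩

/-- A bundled functorial diagram of Kripke frames. -/
structure FDiag (ι : Type*) [Category ι] : Type _ where
  Q : ι → KFrame
  Qm : ∀ i j : ι, (i ⟶ j) → PMorphism (Q i) (Q j)
  hid : ∀ i : ι, (Qm i i (𝟙 i)).toFun = id
  hcomp : ∀ (i j k : ι) (u : i ⟶ j) (v : j ⟶ k),
    (Qm i k (u ≫ v)).toFun = (Qm j k v).toFun ∘ (Qm i j u).toFun

variable {ι : Type} [Category ι] [IsFiltered ι] (E : FDiag ι)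

/-- Combine finitely many eventually-true persistent properties. -/
theorem combine {α : Type*} (k0 : ι) (Pr : ∀ {k : ι}, (k0 ⟶ k) → α → Prop)
    (hper : ∀ {k k' : ι} (w : k0 ⟶ k) (v : k ⟶ k') (a : α), Pr w a → Pr (w ≫ v) a)
    (l : List α) (hev : ∀ a ∈ l, ∃ (k : ι) (w : k0 ⟶ k), Pr w a) :
    ∃ (k : ι) (w : k0 ⟶ k), ∀ a ∈ l, Pr w a := by
  induction l with
  | nil => exact ⟨k0, 𝟙 k0, by simp⟩
  | cons a l ih =>
    obtain ⟨k, w, hw⟩ := ih (fun x hx => hev x (List.mem_cons_of_mem a hx))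
    obtain ⟨k', w', hw'⟩ := hev a List.mem_cons_self
    set c := IsFiltered.coeqHom (w ≫ IsFiltered.leftToMax k k') (w' ≫ IsFiltered.rightToMax k k')
    refine ⟨_, (w ≫ IsFiltered.leftToMax k k') ≫ c, ?_⟩
    intro x hx
    rcases List.mem_cons.mp hx with rfl | hx
    · rw [IsFiltered.coeq_condition, Category.assoc]
      exact hper _ _ _ hw'
    · rw [Category.assoc]
      exact hper _ _ _ (hw x hx)

theorem Fcomp {i j k : ι} (u : i ⟶ j) (v : j ⟶ k) (x : (E.Q i).carrier) :
    (E.Qm i k (u ≫ v)).toFun x = (E.Qm j k v).toFun ((E.Qm i j u).toFun x) :=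
  congrFun (E.hcomp i j k u v) x

/-- The relation identifying points of the disjoint union. -/
def relR (x y : Σ i : ι, (E.Q i).carrier) : Prop :=
  ∃ (k : ι) (u : x.1 ⟶ k) (v : y.1 ⟶ k), (E.Qm _ _ u).toFun x.2 = (E.Qm _ _ v).toFun y.2

theorem relR_equiv : Equivalence (relR E) := by
  constructor
  · intro x; exact ⟨x.1, 𝟙 x.1, 𝟙 x.1, rfl⟩
  · rintro x y ⟨k, u, v, h⟩; exact ⟨k, v, u, h.symm⟩
  · rintro x y z ⟨k, u, v, h⟩ ⟨m, s, t, h'⟩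
    set l := IsFiltered.leftToMax k m
    set r := IsFiltered.rightToMax k m
    set c := IsFiltered.coeqHom (v ≫ l) (s ≫ r)
    refine ⟨_, u ≫ l ≫ c, t ≫ r ≫ c, ?_⟩
    have h1 : (E.Qm _ _ (v ≫ l ≫ c)).toFun y.2 = (E.Qm _ _ (s ≫ r ≫ c)).toFun y.2 := by
      rw [← Category.assoc, ← Category.assoc, IsFiltered.coeq_condition]
    calc (E.Qm _ _ (u ≫ l ≫ c)).toFun x.2
        = (E.Qm _ _ (l ≫ c)).toFun ((E.Qm _ _ u).toFun x.2) := Fcomp E _ _ _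
      _ = (E.Qm _ _ (l ≫ c)).toFun ((E.Qm _ _ v).toFun y.2) := by rw [h]
      _ = (E.Qm _ _ (v ≫ l ≫ c)).toFun y.2 := (Fcomp E _ _ _).symm
      _ = (E.Qm _ _ (s ≫ r ≫ c)).toFun y.2 := h1
      _ = (E.Qm _ _ (r ≫ c)).toFun ((E.Qm _ _ s).toFun y.2) := Fcomp E _ _ _
      _ = (E.Qm _ _ (r ≫ c)).toFun ((E.Qm _ _ t).toFun z.2) := by rw [h']
      _ = (E.Qm _ _ (t ≫ r ≫ c)).toFun z.2 := (Fcomp E _ _ _).symm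

/-- The setoid for the set-level filtered colimit. -/
def colimSetoid : Setoid (Σ i : ι, (E.Q i).carrier) :=
  ⟨relR E, relR_equiv E⟩

/-- Class of a point in the colimit. -/
def mkD (x : Σ i : ι, (E.Q i).carrier) : Quotient (colimSetoid E) :=
  Quotient.mk (colimSetoid E) x

/-- The set-level colimit as a Kripke frame. -/
def D : KFrame where
  carrier := Quotient (colimSetoid E)
  rel d e := ∃ (i : ι) (a b : (E.Q i).carrier), (E.Q i).rel a b ∧
    mkD E ⟨i, a⟩ = d ∧ mkD E ⟨i, b⟩ = e

theorem mk_exact {x y : Σ i : ι, (E.Q i).carrier}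
    (h : mkD E x = mkD E y) : relR E x y := Quotient.exact h

theorem cocone_eq {i j : ι} (u : i ⟶ j) (x : (E.Q i).carrier) :
    mkD E ⟨j, (E.Qm i j u).toFun x⟩ = mkD E ⟨i, x⟩ :=
  Quotient.sound ⟨j, 𝟙 j, u, by rw [E.hid]; rfl⟩

/-- Equality at the same index is witnessed by a single later map. -/
theorem mk_exact_same {i : ι} {a b : (E.Q i).carrier}
    (h : mkD E ⟨i, a⟩ = mkD E ⟨i, b⟩) :
    ∃ (k : ι) (w : i ⟶ k), (E.Qm i k w).toFun a = (E.Qm i k w).toFun b := by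
  obtain ⟨k, u, v, huv⟩ := mk_exact E h
  set c := IsFiltered.coeqHom u v
  refine ⟨_, u ≫ c, ?_⟩
  calc (E.Qm _ _ (u ≫ c)).toFun a = (E.Qm _ _ c).toFun ((E.Qm _ _ u).toFun a) := Fcomp E _ _ _
    _ = (E.Qm _ _ c).toFun ((E.Qm _ _ v).toFun b) := by rw [huv]
    _ = (E.Qm _ _ (v ≫ c)).toFun b := (Fcomp E _ _ _).symm
    _ = (E.Qm _ _ (u ≫ c)).toFun b := by rw [IsFiltered.coeq_condition]

/-- A relation in `D` between two points of the same stage lifts to a later stage. -/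
theorem rel_lift {i : ι} {x y : (E.Q i).carrier}
    (h : (D E).rel (mkD E ⟨i, x⟩) (mkD E ⟨i, y⟩)) :
    ∃ (k : ι) (w : i ⟶ k), (E.Q k).rel ((E.Qm i k w).toFun x) ((E.Qm i k w).toFun y) := by
  obtain ⟨j, a, b, hab, h1, h2⟩ := h
  obtain ⟨k1, u1, v1, e1⟩ := mk_exact E h1
  obtain ⟨k2, u2, v2, e2⟩ := mk_exact E h2
  set l := IsFiltered.leftToMax k1 k2
  set r := IsFiltered.rightToMax k1 k2
  set c := IsFiltered.coeqHom (u1 ≫ l) (u2 ≫ r)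
  have hrel : (E.Q _).rel ((E.Qm _ _ ((u1 ≫ l) ≫ c)).toFun a)
      ((E.Qm _ _ ((u1 ≫ l) ≫ c)).toFun b) :=
    (E.Qm _ _ ((u1 ≫ l) ≫ c)).stable hab
  have ea : (E.Qm _ _ ((u1 ≫ l) ≫ c)).toFun a = (E.Qm _ _ (v1 ≫ l ≫ c)).toFun x := by
    calc (E.Qm _ _ ((u1 ≫ l) ≫ c)).toFun a
        = (E.Qm _ _ c).toFun ((E.Qm _ _ (u1 ≫ l)).toFun a) := Fcomp E _ _ _
      _ = (E.Qm _ _ c).toFun ((E.Qm _ _ l).toFun ((E.Qm _ _ u1).toFun a)) := by rw [Fcomp E]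
      _ = (E.Qm _ _ c).toFun ((E.Qm _ _ l).toFun ((E.Qm _ _ v1).toFun x)) := by rw [e1]
      _ = (E.Qm _ _ c).toFun ((E.Qm _ _ (v1 ≫ l)).toFun x) := by rw [Fcomp E]
      _ = (E.Qm _ _ ((v1 ≫ l) ≫ c)).toFun x := (Fcomp E _ _ _).symm
      _ = (E.Qm _ _ (v1 ≫ l ≫ c)).toFun x := by rw [Category.assoc]
  have eb : (E.Qm _ _ ((u1 ≫ l) ≫ c)).toFun b = (E.Qm _ _ (v2 ≫ r ≫ c)).toFun y := by
    rw [IsFiltered.coeq_condition]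
    calc (E.Qm _ _ ((u2 ≫ r) ≫ c)).toFun b
        = (E.Qm _ _ c).toFun ((E.Qm _ _ (u2 ≫ r)).toFun b) := Fcomp E _ _ _
      _ = (E.Qm _ _ c).toFun ((E.Qm _ _ r).toFun ((E.Qm _ _ u2).toFun b)) := by rw [Fcomp E]
      _ = (E.Qm _ _ c).toFun ((E.Qm _ _ r).toFun ((E.Qm _ _ v2).toFun y)) := by rw [e2]
      _ = (E.Qm _ _ c).toFun ((E.Qm _ _ (v2 ≫ r)).toFun y) := by rw [Fcomp E]
      _ = (E.Qm _ _ ((v2 ≫ r) ≫ c)).toFun y := (Fcomp E _ _ _).symm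
      _ = (E.Qm _ _ (v2 ≫ r ≫ c)).toFun y := by rw [Category.assoc]
  rw [ea, eb] at hrel
  set c2 := IsFiltered.coeqHom (v1 ≫ l ≫ c) (v2 ≫ r ≫ c)
  refine ⟨_, (v1 ≫ l ≫ c) ≫ c2, ?_⟩
  have h2' := (E.Qm _ _ c2).stable hrel
  rw [← Fcomp E, ← Fcomp E, ← IsFiltered.coeq_condition] at h2'
  exact h2'

/-- The cocone leg `Q i → D` is a p-morphism. -/
def ψ (i : ι) : PMorphism (E.Q i) (D E) where
  toFun x := mkD E ⟨i, x⟩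
  stable := fun a b h => ⟨i, a, b, h, rfl, rfl⟩
  isOpen := by
    intro x d h
    obtain ⟨j, a, b, hab, h1, h2⟩ := h
    obtain ⟨k, u, v, huv⟩ := Quotient.exact h1
    have hrel : (E.Q k).rel ((E.Qm _ _ v).toFun x) ((E.Qm _ _ u).toFun b) := by
      rw [← huv]; exact (E.Qm _ _ u).stable hab
    obtain ⟨x', hx', hx2⟩ := (E.Qm _ _ v).isOpen hrel
    refine ⟨x', hx', ?_⟩
    show mkD E ⟨i, x'⟩ = d
    rw [← h2, ← cocone_eq E v x', hx2, cocone_eq E u b]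

/-- The colimit frame is locally finite if the stages are. -/
theorem D_locallyFinite (hQ : ∀ i, KFrameLocallyFinite (E.Q i)) :
    KFrameLocallyFinite (D E) := by
  intro d
  obtain ⟨⟨i, x⟩, rfl⟩ := Quotient.exists_rep d
  have hsub : {e | Relation.ReflTransGen (D E).rel (mkD E ⟨i, x⟩) e} ⊆
      (fun y => mkD E ⟨i, y⟩) '' {y | Relation.ReflTransGen (E.Q i).rel x y} := by
    intro e he
    obtain ⟨y, hy, hy2⟩ := lift_rtg (ψ E i) he
    exact ⟨y, hy, hy2⟩
  exact Set.Finite.subset (Set.Finite.image _ (hQ i x)) hsub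

/-- The comparison morphism `D → C` induced by a compatible cocone `φ`. -/
def Φ (C : KFrame) (φ : ∀ i : ι, PMorphism (E.Q i) C)
    (hφ : ∀ {i j : ι} (u : i ⟶ j), (φ j).toFun ∘ (E.Qm i j u).toFun = (φ i).toFun) :
    PMorphism (D E) C where
  toFun := Quotient.lift (fun x : Σ i : ι, (E.Q i).carrier => (φ x.1).toFun x.2) (by
    rintro ⟨i, a⟩ ⟨j, b⟩ ⟨k, u, v, huv⟩
    show (φ i).toFun a = (φ j).toFun b
    calc (φ i).toFun a = (φ k).toFun ((E.Qm _ _ u).toFun a) := (congrFun (hφ u) a).symm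
      _ = (φ k).toFun ((E.Qm _ _ v).toFun b) := by rw [huv]
      _ = (φ j).toFun b := congrFun (hφ v) b)
  stable := by
    rintro d e ⟨i, a, b, hab, rfl, rfl⟩
    exact (φ i).stable hab
  isOpen := by
    intro d c' h
    obtain ⟨⟨i, x⟩, rfl⟩ := Quotient.exists_rep d
    have h' : C.rel ((φ i).toFun x) c' := h
    obtain ⟨x', hx', hx2⟩ := (φ i).isOpen h'
    exact ⟨mkD E ⟨i, x'⟩, ⟨i, x, x', hx', rfl, rfl⟩, hx2⟩

theorem Φψ (C : KFrame) (φ : ∀ i : ι, PMorphism (E.Q i) C)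
    (hφ : ∀ {i j : ι} (u : i ⟶ j), (φ j).toFun ∘ (E.Qm i j u).toFun = (φ i).toFun)
    (i : ι) (x : (E.Q i).carrier) :
    (Φ E C φ @hφ).toFun ((ψ E i).toFun x) = (φ i).toFun x := rfl

end Stmt19Aux

open CategoryTheory in
/-- Finite Kripke frames are finitely presentable in the category of locally finite
Kripke frames: given a filtered diagram of locally finite frames with a colimit cocone
`(C, φ)` in that category, every p-morphism from a finite frame `P` to `C` factors
through some stage, uniquely up to identification at a common later stage. -/
theorem stmt19 (ι : Type) [Category ι] [IsFiltered ι]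
    (Q : ι → KFrame) (hQ : ∀ i, KFrameLocallyFinite (Q i))
    (Qm : ∀ {i j : ι}, (i ⟶ j) → PMorphism (Q i) (Q j))
    (hQid : ∀ i : ι, (Qm (𝟙 i)).toFun = id)
    (hQcomp : ∀ {i j k : ι} (u : i ⟶ j) (v : j ⟶ k),
      (Qm (u ≫ v)).toFun = (Qm v).toFun ∘ (Qm u).toFun)
    (C : KFrame) (hC : KFrameLocallyFinite C)
    (φ : ∀ i : ι, PMorphism (Q i) C)
    (hφ : ∀ {i j : ι} (u : i ⟶ j), (φ j).toFun ∘ (Qm u).toFun = (φ i).toFun)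
    (hcolim : ∀ (T : KFrame), KFrameLocallyFinite T →
      ∀ h : ∀ i : ι, PMorphism (Q i) T,
        (∀ {i j : ι} (u : i ⟶ j), (h j).toFun ∘ (Qm u).toFun = (h i).toFun) →
        ∃! ψ : PMorphism C T, ∀ i : ι, ψ.toFun ∘ (φ i).toFun = (h i).toFun)
    (P : KFrame) (hPfin : Finite P.carrier) (f : PMorphism P C) :
    -- existence of a factorization through some stage
    (∃ (i : ι) (g : PMorphism P (Q i)), (φ i).toFun ∘ g.toFun = f.toFun) ∧
    -- uniqueness up to a common later stage
    (∀ (i j : ι) (g : PMorphism P (Q i)) (g' : PMorphism P (Q j)),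
      (φ i).toFun ∘ g.toFun = (φ j).toFun ∘ g'.toFun →
      ∃ (k : ι) (u : i ⟶ k) (v : j ⟶ k),
        (Qm u).toFun ∘ g.toFun = (Qm v).toFun ∘ g'.toFun) := by
  classical
  open Stmt19Aux in
  set E : Stmt19Aux.FDiag ι :=
    ⟨Q, fun i j u => Qm u, hQid, fun i j k u v => hQcomp u v⟩ with hE
  -- the comparison morphism Ψ : C → D
  obtain ⟨Ψ, hΨ, -⟩ := hcolim (Stmt19Aux.D E) (Stmt19Aux.D_locallyFinite E hQ)
    (fun i => Stmt19Aux.ψ E i)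
    (fun {i j} u => funext fun x => Stmt19Aux.cocone_eq E u x)
  have hΨ' : ∀ (i : ι) (x : (Q i).carrier),
      Ψ.toFun ((φ i).toFun x) = Stmt19Aux.mkD E ⟨i, x⟩ := fun i x => congrFun (hΨ i) x
  -- the inverse morphism Φ : D → C and Φ ∘ Ψ = id
  have hΦΨ : ∀ c : C.carrier,
      (Stmt19Aux.Φ E C φ @hφ).toFun (Ψ.toFun c) = c := by
    obtain ⟨χ, hχ, hχu⟩ := hcolim C hC φ @hφ
    have e1 : Stmt19Aux.PComp Ψ (Stmt19Aux.Φ E C φ @hφ) = χ := by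
      apply hχu
      intro i
      funext x
      show (Stmt19Aux.Φ E C φ @hφ).toFun (Ψ.toFun ((φ i).toFun x)) = (φ i).toFun x
      rw [hΨ' i x]
      rfl
    have e2 : Stmt19Aux.PId C = χ := by
      apply hχu
      intro i
      rfl
    intro c
    have := congrFun (congrArg PMorphism.toFun (e1.trans e2.symm)) c
    exact this
  constructor
  · -- EXISTENCE
    haveI : Fintype P.carrier := Fintype.ofFinite P.carrier
    -- Step 1: common representatives
    obtain ⟨k0⟩ : Nonempty ι := IsFiltered.nonempty
    obtain ⟨k1, w1, h1⟩ := Stmt19Aux.combine k0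
      (fun {k} (_ : k0 ⟶ k) (p : P.carrier) =>
        ∃ x : (Q k).carrier, Stmt19Aux.mkD E ⟨k, x⟩ = Ψ.toFun (f.toFun p))
      (by
        rintro k k' w v p ⟨x, hx⟩
        exact ⟨(E.Qm k k' v).toFun x, (Stmt19Aux.cocone_eq E v x).trans hx⟩)
      (Finset.univ : Finset P.carrier).toList
      (by
        intro p _
        obtain ⟨⟨i, x⟩, hx⟩ := Quotient.exists_rep (Ψ.toFun (f.toFun p))
        refine ⟨IsFiltered.max k0 i, IsFiltered.leftToMax k0 i,
          (E.Qm i _ (IsFiltered.rightToMax k0 i)).toFun x, ?_⟩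
        exact (Stmt19Aux.cocone_eq E (IsFiltered.rightToMax k0 i) x).trans hx)
    have h1' : ∀ p : P.carrier,
        ∃ x : (Q k1).carrier, Stmt19Aux.mkD E ⟨k1, x⟩ = Ψ.toFun (f.toFun p) :=
      fun p => h1 p (Finset.mem_toList.mpr (Finset.mem_univ p))
    choose g0 hg0 using h1'
    -- Step 2: make it stable
    obtain ⟨k2, w2, h2⟩ := Stmt19Aux.combine k1
      (fun {k} (w : k1 ⟶ k) (pq : P.carrier × P.carrier) =>
        P.rel pq.1 pq.2 →
          (Q k).rel ((E.Qm k1 k w).toFun (g0 pq.1)) ((E.Qm k1 k w).toFun (g0 pq.2)))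
      (by
        intro k k' w v pq hw hrel
        rw [Stmt19Aux.Fcomp E, Stmt19Aux.Fcomp E]
        exact (E.Qm k k' v).stable (hw hrel))
      (Finset.univ : Finset (P.carrier × P.carrier)).toList
      (by
        rintro ⟨p, q⟩ -
        by_cases hrel : P.rel p q
        · have hD : (Stmt19Aux.D E).rel (Stmt19Aux.mkD E ⟨k1, g0 p⟩)
              (Stmt19Aux.mkD E ⟨k1, g0 q⟩) := by
            rw [hg0 p, hg0 q]
            exact Ψ.stable (f.stable hrel)
          obtain ⟨k, w, hw⟩ := Stmt19Aux.rel_lift E hD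
          exact ⟨k, w, fun _ => hw⟩
        · exact ⟨k1, 𝟙 k1, fun h => absurd h hrel⟩)
    have h2' : ∀ p q : P.carrier, P.rel p q →
        (Q k2).rel ((E.Qm k1 k2 w2).toFun (g0 p)) ((E.Qm k1 k2 w2).toFun (g0 q)) :=
      fun p q => h2 (p, q) (Finset.mem_toList.mpr (Finset.mem_univ _))
    set g1 : P.carrier → (Q k2).carrier := fun p => (E.Qm k1 k2 w2).toFun (g0 p) with hg1def
    have hg1 : ∀ p, Stmt19Aux.mkD E ⟨k2, g1 p⟩ = Ψ.toFun (f.toFun p) := fun p =>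
      (Stmt19Aux.cocone_eq E w2 (g0 p)).trans (hg0 p)
    -- Step 3: make it open; the relevant set of pairs is finite
    have hU : (⋃ p : P.carrier, {y | Relation.ReflTransGen (Q k2).rel (g1 p) y}).Finite :=
      Set.finite_iUnion (fun p => hQ k2 (g1 p))
    have hTfin : {pq : P.carrier × (Q k2).carrier | (Q k2).rel (g1 pq.1) pq.2}.Finite := by
      apply Set.Finite.subset (Set.Finite.prod (Set.finite_univ (α := P.carrier)) hU)
      rintro ⟨p, y⟩ h
      exact ⟨Set.mem_univ p, Set.mem_iUnion.mpr ⟨p, Relation.ReflTransGen.single h⟩⟩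
    obtain ⟨k3, w3, h3⟩ := Stmt19Aux.combine k2
      (fun {k} (w : k2 ⟶ k) (pq : P.carrier × (Q k2).carrier) =>
        (Q k2).rel (g1 pq.1) pq.2 →
          ∃ p', P.rel pq.1 p' ∧ (E.Qm k2 k w).toFun (g1 p') = (E.Qm k2 k w).toFun pq.2)
      (by
        intro k k' w v pq hw hrel
        obtain ⟨p', hp', he⟩ := hw hrel
        refine ⟨p', hp', ?_⟩
        rw [Stmt19Aux.Fcomp E, Stmt19Aux.Fcomp E, he])
      hTfin.toFinset.toList
      (by
        rintro ⟨p, y⟩ -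
        by_cases hrel : (Q k2).rel (g1 p) y
        swap
        · exact ⟨k2, 𝟙 k2, fun h => absurd h hrel⟩
        have hD : (Stmt19Aux.D E).rel (Ψ.toFun (f.toFun p)) (Stmt19Aux.mkD E ⟨k2, y⟩) := by
          rw [← hg1 p]
          exact (Stmt19Aux.ψ E k2).stable hrel
        obtain ⟨p', hp', hΨp'⟩ := (Stmt19Aux.PComp f Ψ).isOpen hD
        have : Stmt19Aux.mkD E ⟨k2, g1 p'⟩ = Stmt19Aux.mkD E ⟨k2, y⟩ :=
          (hg1 p').trans hΨp'
        obtain ⟨k, w, hw⟩ := Stmt19Aux.mk_exact_same E this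
        exact ⟨k, w, fun _ => ⟨p', hp', hw⟩⟩)
    have h3' : ∀ (p : P.carrier) (y : (Q k2).carrier), (Q k2).rel (g1 p) y →
        ∃ p', P.rel p p' ∧ (E.Qm k2 k3 w3).toFun (g1 p') = (E.Qm k2 k3 w3).toFun y := by
      intro p y hrel
      exact h3 (p, y) (Finset.mem_toList.mpr (hTfin.mem_toFinset.mpr hrel)) hrel
    -- assemble the p-morphism at stage k3
    refine ⟨k3, ⟨fun p => (E.Qm k2 k3 w3).toFun (g1 p), ?_, ?_⟩, ?_⟩
    · intro p q hrel
      exact (E.Qm k2 k3 w3).stable (h2' p q hrel)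
    · intro p y' hrel
      obtain ⟨y, hy, hy2⟩ := (E.Qm k2 k3 w3).isOpen hrel
      obtain ⟨p', hp', he⟩ := h3' p y hy
      exact ⟨p', hp', he.trans hy2⟩
    · funext p
      show (φ k3).toFun ((E.Qm k2 k3 w3).toFun (g1 p)) = f.toFun p
      have hmk : Stmt19Aux.mkD E ⟨k3, (E.Qm k2 k3 w3).toFun (g1 p)⟩ = Ψ.toFun (f.toFun p) :=
        (Stmt19Aux.cocone_eq E w3 (g1 p)).trans (hg1 p)
      calc (φ k3).toFun ((E.Qm k2 k3 w3).toFun (g1 p))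
          = (Stmt19Aux.Φ E C φ @hφ).toFun
              (Stmt19Aux.mkD E ⟨k3, (E.Qm k2 k3 w3).toFun (g1 p)⟩) := rfl
        _ = (Stmt19Aux.Φ E C φ @hφ).toFun (Ψ.toFun (f.toFun p)) := by rw [hmk]
        _ = f.toFun p := hΦΨ _
  · -- UNIQUENESS
    intro i j g g' hgg
    haveI : Fintype P.carrier := Fintype.ofFinite P.carrier
    set k0 := IsFiltered.max i j
    set u0 := IsFiltered.leftToMax i j
    set v0 := IsFiltered.rightToMax i j
    obtain ⟨k, w, hw⟩ := Stmt19Aux.combine k0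
      (fun {m} (w : k0 ⟶ m) (p : P.carrier) =>
        (E.Qm k0 m w).toFun ((E.Qm i k0 u0).toFun (g.toFun p)) =
        (E.Qm k0 m w).toFun ((E.Qm j k0 v0).toFun (g'.toFun p)))
      (by
        intro m m' w v p hp
        rw [Stmt19Aux.Fcomp E, Stmt19Aux.Fcomp E, hp])
      (Finset.univ : Finset P.carrier).toList
      (by
        intro p _
        have hmk : Stmt19Aux.mkD E ⟨k0, (E.Qm i k0 u0).toFun (g.toFun p)⟩ =
            Stmt19Aux.mkD E ⟨k0, (E.Qm j k0 v0).toFun (g'.toFun p)⟩ := by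
          rw [Stmt19Aux.cocone_eq E u0, Stmt19Aux.cocone_eq E v0]
          rw [← hΨ' i (g.toFun p), ← hΨ' j (g'.toFun p)]
          exact congrArg Ψ.toFun (congrFun hgg p)
        exact Stmt19Aux.mk_exact_same E hmk)
    refine ⟨k, u0 ≫ w, v0 ≫ w, funext fun p => ?_⟩
    have := hw p (Finset.mem_toList.mpr (Finset.mem_univ p))
    show (Qm (u0 ≫ w)).toFun (g.toFun p) = (Qm (v0 ≫ w)).toFun (g'.toFun p)
    rw [show (Qm (u0 ≫ w)).toFun (g.toFun p) = (E.Qm i k (u0 ≫ w)).toFun (g.toFun p) from rfl,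
      show (Qm (v0 ≫ w)).toFun (g'.toFun p) = (E.Qm j k (v0 ≫ w)).toFun (g'.toFun p) from rfl,
      Stmt19Aux.Fcomp E, Stmt19Aux.Fcomp E]
    exact this
end
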